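/- arXiv:1810.11355 — 2 statements merged into one kernel-verified Lean document; each statement's English description precedes it below -/
import Mathlib

section
/- The rule Repl⁻ is admissible in G3c^=: for every atomic formula P, terms s and r, variable v not occurring in s or r, and finite multisets Γ, Δ of formulas, if the sequent s = r, P[v/r], Γ ⇒ Δ is derivable in G3c^=, then the sequent s = r, P[v/s], Γ ⇒ Δ is derivable in G3c^=. -/
open FirstOrder Language Multiset

universe u v

variable {L : FirstOrder.Language.{u, v}}

/-- Number of occurrences of the variable `v` in a term. -/
def tCount (v : ℕ) : L.Term ℕ → ℕ
  | .var w => if w = v then 1 else 0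
  | .func _ ts => Finset.univ.sum fun i => tCount v (ts i)

/-- First-order formulas over the language `L` (with built-in equality),
with natural numbers as variables. -/
inductive Fm (L : FirstOrder.Language.{u, v}) : Type (max u v) where
  | falsum : Fm L
  | equal : L.Term ℕ → L.Term ℕ → Fm L
  | rel {l : ℕ} : L.Relations l → (Fin l → L.Term ℕ) → Fm L
  | and : Fm L → Fm L → Fm L
  | or : Fm L → Fm L → Fm L
  | imp : Fm L → Fm L → Fm L
  | all : ℕ → Fm L → Fm L
  | ex : ℕ → Fm L → Fm L

namespace Fm

/-- Atomic formulas: equalities and relational atoms. -/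
inductive IsAtomic : Fm L → Prop where
  | equal (t₁ t₂ : L.Term ℕ) : (Fm.equal t₁ t₂).IsAtomic
  | rel {l : ℕ} (R : L.Relations l) (ts : Fin l → L.Term ℕ) : (Fm.rel R ts).IsAtomic

/-- Number of free occurrences of the variable `v` in a formula. -/
def fCount (v : ℕ) : Fm L → ℕ
  | falsum => 0
  | equal t₁ t₂ => tCount v t₁ + tCount v t₂
  | rel _ ts => Finset.univ.sum fun i => tCount v (ts i)
  | and A B => fCount v A + fCount v B
  | or A B => fCount v A + fCount v B
  | imp A B => fCount v A + fCount v B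
  | all y A => if y = v then 0 else fCount v A
  | ex y A => if y = v then 0 else fCount v A

/-- The set of free variables of a formula. -/
def freeVars : Fm L → Set ℕ
  | falsum => ∅
  | equal t₁ t₂ => {w | tCount w t₁ ≠ 0 ∨ tCount w t₂ ≠ 0}
  | rel _ ts => {w | ∃ i, tCount w (ts i) ≠ 0}
  | and A B => A.freeVars ∪ B.freeVars
  | or A B => A.freeVars ∪ B.freeVars
  | imp A B => A.freeVars ∪ B.freeVars
  | all y A => A.freeVars \ {y}
  | ex y A => A.freeVars \ {y}

/-- Simultaneous substitution of terms for the free variables of a formula. -/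
def ssub (σ : ℕ → L.Term ℕ) : Fm L → Fm L
  | falsum => falsum
  | equal t₁ t₂ => equal (t₁.subst σ) (t₂.subst σ)
  | rel R ts => rel R fun i => (ts i).subst σ
  | and A B => and (A.ssub σ) (B.ssub σ)
  | or A B => or (A.ssub σ) (B.ssub σ)
  | imp A B => imp (A.ssub σ) (B.ssub σ)
  | all y A => all y (A.ssub (Function.update σ y (Term.var y)))
  | ex y A => ex y (A.ssub (Function.update σ y (Term.var y)))

/-- `A.subst v t` is `A[v/t]`, the substitution of the term `t`
for the variable `v` in `A`. -/
def subst (v : ℕ) (t : L.Term ℕ) (A : Fm L) : Fm L :=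
  A.ssub (Function.update (Term.var : ℕ → L.Term ℕ) v t)

/-- `t` is free for `x` in `A` (no free occurrence of `x` lies in the scope of a
quantifier binding a variable of `t`). -/
def freeFor (t : L.Term ℕ) (x : ℕ) : Fm L → Prop
  | falsum => True
  | equal _ _ => True
  | rel _ _ => True
  | and A B => freeFor t x A ∧ freeFor t x B
  | or A B => freeFor t x A ∧ freeFor t x B
  | imp A B => freeFor t x A ∧ freeFor t x B
  | all y A => x = y ∨ x ∉ A.freeVars ∨ (tCount y t = 0 ∧ freeFor t x A)
  | ex y A => x = y ∨ x ∉ A.freeVars ∨ (tCount y t = 0 ∧ freeFor t x A)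

end Fm

/-- The rule Repl, given as the relation between the antecedent of the premiss and the
antecedent of the conclusion (the succedent is unchanged): from
`s = r, P[v/s], P[v/r], Γ ⇒ Δ` infer `s = r, P[v/s], Γ ⇒ Δ`, for `P` atomic and
`v` not occurring in `s, r`. -/
def ReplFull (L : FirstOrder.Language.{u, v}) : Multiset (Fm L) → Multiset (Fm L) → Prop := fun Γp Γc =>
  ∃ (s r : L.Term ℕ) (v : ℕ) (P : Fm L) (Γ : Multiset (Fm L)),
    P.IsAtomic ∧ tCount v s = 0 ∧ tCount v r = 0 ∧
    Γp = Fm.equal s r ::ₘ P.subst v s ::ₘ P.subst v r ::ₘ Γ ∧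
    Γc = Fm.equal s r ::ₘ P.subst v s ::ₘ Γ

/-- The rule Repl⁻: from `s = r, P[v/r], Γ ⇒ Δ` infer `s = r, P[v/s], Γ ⇒ Δ`,
for `P` atomic and `v` not occurring in `s, r`. -/
def ReplMinus (L : FirstOrder.Language.{u, v}) : Multiset (Fm L) → Multiset (Fm L) → Prop := fun Γp Γc =>
  ∃ (s r : L.Term ℕ) (v : ℕ) (P : Fm L) (Γ : Multiset (Fm L)),
    P.IsAtomic ∧ tCount v s = 0 ∧ tCount v r = 0 ∧
    Γp = Fm.equal s r ::ₘ P.subst v r ::ₘ Γ ∧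
    Γc = Fm.equal s r ::ₘ P.subst v s ::ₘ Γ

/-- The rule Repl₁⁻: Repl⁻ restricted to atomic `P` with exactly one occurrence of `v`. -/
def ReplMinus1 (L : FirstOrder.Language.{u, v}) : Multiset (Fm L) → Multiset (Fm L) → Prop := fun Γp Γc =>
  ∃ (s r : L.Term ℕ) (v : ℕ) (P : Fm L) (Γ : Multiset (Fm L)),
    P.IsAtomic ∧ tCount v s = 0 ∧ tCount v r = 0 ∧ Fm.fCount v P = 1 ∧
    Γp = Fm.equal s r ::ₘ P.subst v r ::ₘ Γ ∧
    Γc = Fm.equal s r ::ₘ P.subst v s ::ₘ Γ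

/-- `DerC rp n Γ Δ`: the sequent `Γ ⇒ Δ` has a derivation of height at most `n` in the
classical multisuccedent G3 calculus `G3c` with the equality rule Ref and the
replacement rule given by `rp` (e.g. `ReplFull L` for `G3c^=`, `ReplMinus L` for `G3c^=⁻`,
`ReplMinus1 L` for `G3c₁^=⁻`). -/
inductive DerC (rp : Multiset (Fm L) → Multiset (Fm L) → Prop) :
    ℕ → Multiset (Fm L) → Multiset (Fm L) → Prop where
  | ax {n : ℕ} {Γ Δ : Multiset (Fm L)} {P : Fm L} (hP : P.IsAtomic) :
      DerC rp n (P ::ₘ Γ) (P ::ₘ Δ)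
  | botL {n : ℕ} {Γ Δ : Multiset (Fm L)} : DerC rp n (Fm.falsum ::ₘ Γ) Δ
  | andL {n : ℕ} {Γ Δ : Multiset (Fm L)} {A B : Fm L} :
      DerC rp n (A ::ₘ B ::ₘ Γ) Δ → DerC rp (n + 1) (Fm.and A B ::ₘ Γ) Δ
  | andR {n : ℕ} {Γ Δ : Multiset (Fm L)} {A B : Fm L} :
      DerC rp n Γ (A ::ₘ Δ) → DerC rp n Γ (B ::ₘ Δ) → DerC rp (n + 1) Γ (Fm.and A B ::ₘ Δ)
  | orL {n : ℕ} {Γ Δ : Multiset (Fm L)} {A B : Fm L} :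
      DerC rp n (A ::ₘ Γ) Δ → DerC rp n (B ::ₘ Γ) Δ → DerC rp (n + 1) (Fm.or A B ::ₘ Γ) Δ
  | orR {n : ℕ} {Γ Δ : Multiset (Fm L)} {A B : Fm L} :
      DerC rp n Γ (A ::ₘ B ::ₘ Δ) → DerC rp (n + 1) Γ (Fm.or A B ::ₘ Δ)
  | impL {n : ℕ} {Γ Δ : Multiset (Fm L)} {A B : Fm L} :
      DerC rp n Γ (A ::ₘ Δ) → DerC rp n (B ::ₘ Γ) Δ → DerC rp (n + 1) (Fm.imp A B ::ₘ Γ) Δ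
  | impR {n : ℕ} {Γ Δ : Multiset (Fm L)} {A B : Fm L} :
      DerC rp n (A ::ₘ Γ) (B ::ₘ Δ) → DerC rp (n + 1) Γ (Fm.imp A B ::ₘ Δ)
  | allL {n : ℕ} {Γ Δ : Multiset (Fm L)} {x : ℕ} {t : L.Term ℕ} {A : Fm L}
      (hf : Fm.freeFor t x A) :
      DerC rp n (A.subst x t ::ₘ Fm.all x A ::ₘ Γ) Δ → DerC rp (n + 1) (Fm.all x A ::ₘ Γ) Δ
  | allR {n : ℕ} {Γ Δ : Multiset (Fm L)} {x y : ℕ} {A : Fm L}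
      (hf : Fm.freeFor (Term.var y) x A) (hy : y ∉ (Fm.all x A).freeVars)
      (hΓ : ∀ C ∈ Γ, y ∉ Fm.freeVars C) (hΔ : ∀ C ∈ Δ, y ∉ Fm.freeVars C) :
      DerC rp n Γ (A.subst x (Term.var y) ::ₘ Δ) → DerC rp (n + 1) Γ (Fm.all x A ::ₘ Δ)
  | exL {n : ℕ} {Γ Δ : Multiset (Fm L)} {x y : ℕ} {A : Fm L}
      (hf : Fm.freeFor (Term.var y) x A) (hy : y ∉ (Fm.ex x A).freeVars)
      (hΓ : ∀ C ∈ Γ, y ∉ Fm.freeVars C) (hΔ : ∀ C ∈ Δ, y ∉ Fm.freeVars C) :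
      DerC rp n (A.subst x (Term.var y) ::ₘ Γ) Δ → DerC rp (n + 1) (Fm.ex x A ::ₘ Γ) Δ
  | exR {n : ℕ} {Γ Δ : Multiset (Fm L)} {x : ℕ} {t : L.Term ℕ} {A : Fm L}
      (hf : Fm.freeFor t x A) :
      DerC rp n Γ (A.subst x t ::ₘ Fm.ex x A ::ₘ Δ) → DerC rp (n + 1) Γ (Fm.ex x A ::ₘ Δ)
  | ref {n : ℕ} {Γ Δ : Multiset (Fm L)} (t : L.Term ℕ) :
      DerC rp n (Fm.equal t t ::ₘ Γ) Δ → DerC rp (n + 1) Γ Δ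
  | repl {n : ℕ} {Γp Γc Δ : Multiset (Fm L)} (h : rp Γp Γc) :
      DerC rp n Γp Δ → DerC rp (n + 1) Γc Δ

/-- `DerI rp n Γ Δ`: the sequent `Γ ⇒ Δ` has a derivation of height at most `n` in the
intuitionistic multisuccedent G3 calculus (the right rules for `→` and `∀` have
single-succedent premisses, and L→ repeats its principal formula) with the equality rule
Ref and the replacement rule given by `rp`. -/
inductive DerI (rp : Multiset (Fm L) → Multiset (Fm L) → Prop) :
    ℕ → Multiset (Fm L) → Multiset (Fm L) → Prop where
  | ax {n : ℕ} {Γ Δ : Multiset (Fm L)} {P : Fm L} (hP : P.IsAtomic) :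
      DerI rp n (P ::ₘ Γ) (P ::ₘ Δ)
  | botL {n : ℕ} {Γ Δ : Multiset (Fm L)} : DerI rp n (Fm.falsum ::ₘ Γ) Δ
  | andL {n : ℕ} {Γ Δ : Multiset (Fm L)} {A B : Fm L} :
      DerI rp n (A ::ₘ B ::ₘ Γ) Δ → DerI rp (n + 1) (Fm.and A B ::ₘ Γ) Δ
  | andR {n : ℕ} {Γ Δ : Multiset (Fm L)} {A B : Fm L} :
      DerI rp n Γ (A ::ₘ Δ) → DerI rp n Γ (B ::ₘ Δ) → DerI rp (n + 1) Γ (Fm.and A B ::ₘ Δ)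
  | orL {n : ℕ} {Γ Δ : Multiset (Fm L)} {A B : Fm L} :
      DerI rp n (A ::ₘ Γ) Δ → DerI rp n (B ::ₘ Γ) Δ → DerI rp (n + 1) (Fm.or A B ::ₘ Γ) Δ
  | orR {n : ℕ} {Γ Δ : Multiset (Fm L)} {A B : Fm L} :
      DerI rp n Γ (A ::ₘ B ::ₘ Δ) → DerI rp (n + 1) Γ (Fm.or A B ::ₘ Δ)
  | impL {n : ℕ} {Γ Δ : Multiset (Fm L)} {A B : Fm L} :
      DerI rp n (Fm.imp A B ::ₘ Γ) (A ::ₘ Δ) → DerI rp n (B ::ₘ Γ) Δ →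
      DerI rp (n + 1) (Fm.imp A B ::ₘ Γ) Δ
  | impR {n : ℕ} {Γ Δ : Multiset (Fm L)} {A B : Fm L} :
      DerI rp n (A ::ₘ Γ) {B} → DerI rp (n + 1) Γ (Fm.imp A B ::ₘ Δ)
  | allL {n : ℕ} {Γ Δ : Multiset (Fm L)} {x : ℕ} {t : L.Term ℕ} {A : Fm L}
      (hf : Fm.freeFor t x A) :
      DerI rp n (A.subst x t ::ₘ Fm.all x A ::ₘ Γ) Δ → DerI rp (n + 1) (Fm.all x A ::ₘ Γ) Δ
  | allR {n : ℕ} {Γ Δ : Multiset (Fm L)} {x y : ℕ} {A : Fm L}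
      (hf : Fm.freeFor (Term.var y) x A) (hy : y ∉ (Fm.all x A).freeVars)
      (hΓ : ∀ C ∈ Γ, y ∉ Fm.freeVars C) :
      DerI rp n Γ {A.subst x (Term.var y)} → DerI rp (n + 1) Γ (Fm.all x A ::ₘ Δ)
  | exL {n : ℕ} {Γ Δ : Multiset (Fm L)} {x y : ℕ} {A : Fm L}
      (hf : Fm.freeFor (Term.var y) x A) (hy : y ∉ (Fm.ex x A).freeVars)
      (hΓ : ∀ C ∈ Γ, y ∉ Fm.freeVars C) (hΔ : ∀ C ∈ Δ, y ∉ Fm.freeVars C) :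
      DerI rp n (A.subst x (Term.var y) ::ₘ Γ) Δ → DerI rp (n + 1) (Fm.ex x A ::ₘ Γ) Δ
  | exR {n : ℕ} {Γ Δ : Multiset (Fm L)} {x : ℕ} {t : L.Term ℕ} {A : Fm L}
      (hf : Fm.freeFor t x A) :
      DerI rp n Γ (A.subst x t ::ₘ Fm.ex x A ::ₘ Δ) → DerI rp (n + 1) Γ (Fm.ex x A ::ₘ Δ)
  | ref {n : ℕ} {Γ Δ : Multiset (Fm L)} (t : L.Term ℕ) :
      DerI rp n (Fm.equal t t ::ₘ Γ) Δ → DerI rp (n + 1) Γ Δ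
  | repl {n : ℕ} {Γp Γc Δ : Multiset (Fm L)} (h : rp Γp Γc) :
      DerI rp n Γp Δ → DerI rp (n + 1) Γc Δ

/-! Weaken `s = r, P[v/r], Γ ⇒ Δ` by `P[v/s]` and apply Repl. Left weakening is
height-preserving admissible, but not by a plain induction: the eigenvariable of an R∀ or L∃
step may occur free in the new formula and has to be renamed to a fresh variable first. So
weakening is proved together with substitution, by one induction on the derivation: from
`Γ ⇒ Δ` derive `Θ, Γσ ⇒ Δσ` for every `σ` that introduces no bound variable of the sequent.
Premisses have no bound variables beyond those of their conclusion, so this side condition is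
inherited upwards, and a fresh eigenvariable `z` keeps it for `σ[y ↦ z]`. -/

namespace FirstOrder.Language.Term

theorem subst_subst {α β γ : Type*} (t : L.Term α) (τ : α → L.Term β) (σ : β → L.Term γ) :
    (t.subst τ).subst σ = t.subst fun w => (τ w).subst σ := by
  induction t with
  | var a => rfl
  | func f ts ih => simp [ih]

theorem subst_var {α : Type*} (t : L.Term α) : t.subst Term.var = t := by
  induction t with
  | var a => rfl
  | func f ts ih => simp [ih]

@[simp]
theorem tCount_var_eq_zero {w a : ℕ} : tCount w (var a : L.Term ℕ) = 0 ↔ a ≠ w := by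
  simp [tCount]

theorem tCount_func_ne_zero {w l : ℕ} {f : L.Functions l} {ts : Fin l → L.Term ℕ} :
    tCount w (func f ts) ≠ 0 ↔ ∃ i, tCount w (ts i) ≠ 0 := by
  simp [tCount, Finset.sum_eq_zero_iff]

theorem tCount_subst_ne_zero {z : ℕ} {t : L.Term ℕ} {σ : ℕ → L.Term ℕ} :
    tCount z (t.subst σ) ≠ 0 ↔ ∃ w, tCount w t ≠ 0 ∧ tCount z (σ w) ≠ 0 := by
  induction t with
  | var a => simp
  | func f ts ih =>
    simp only [subst, tCount_func_ne_zero, ih]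
    exact ⟨fun ⟨i, w, hi, hw⟩ => ⟨w, ⟨i, hi⟩, hw⟩, fun ⟨w, ⟨i, hi⟩, hw⟩ => ⟨i, w, hi, hw⟩⟩

theorem subst_congr {t : L.Term ℕ} {σ τ : ℕ → L.Term ℕ}
    (h : ∀ w, tCount w t ≠ 0 → σ w = τ w) : t.subst σ = t.subst τ := by
  induction t with
  | var a => exact h a (by simp)
  | func f ts ih =>
    simp only [subst, func.injEq, heq_eq_eq, true_and]
    exact funext fun i => ih i fun w hw => h w (tCount_func_ne_zero.2 ⟨i, hw⟩)

theorem subst_update_of_tCount_eq_zero {t u : L.Term ℕ} {y : ℕ} (h : tCount y t = 0) :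
    t.subst (Function.update var y u) = t := by
  conv_rhs => rw [← subst_var t]
  exact subst_congr fun w hw => Function.update_of_ne (by rintro rfl; exact hw h) _ _

theorem subst_update_subst (t : L.Term ℕ) (x : ℕ) (u : L.Term ℕ) (σ : ℕ → L.Term ℕ) :
    (t.subst (Function.update var x u)).subst σ = t.subst (Function.update σ x (u.subst σ)) := by
  rw [subst_subst]
  congr 1
  funext w
  rcases eq_or_ne w x with rfl | hwx
  · simp
  · simp [Function.update_of_ne hwx]

theorem subst_update_var_subst (t : L.Term ℕ) {y : ℕ} (u : L.Term ℕ) {σ : ℕ → L.Term ℕ}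
    (hσ : ∀ w ≠ y, tCount y (σ w) = 0) :
    (t.subst (Function.update σ y (var y))).subst (Function.update var y u)
      = t.subst (Function.update σ y u) := by
  rw [subst_subst]
  congr 1
  funext w
  rcases eq_or_ne w y with rfl | hwy
  · simp
  · simp [Function.update_of_ne hwy, subst_update_of_tCount_eq_zero (hσ w hwy)]

def varBound : L.Term ℕ → ℕ
  | var w => w + 1
  | func _ ts => Finset.univ.sup fun i => varBound (ts i)

theorem tCount_eq_zero_of_varBound_le {t : L.Term ℕ} {w : ℕ} (h : t.varBound ≤ w) :
    tCount w t = 0 := by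
  induction t with
  | var a => simp only [varBound] at h; simp; omega
  | func f ts ih =>
    simp only [varBound, Finset.sup_le_iff, Finset.mem_univ, true_implies] at h
    simpa [tCount, Finset.sum_eq_zero_iff] using fun i => ih i (h i)

end FirstOrder.Language.Term

namespace Fm

open Function Term

def bv : Fm L → Set ℕ
  | falsum | equal _ _ | rel _ _ => ∅
  | and A B | or A B | imp A B => A.bv ∪ B.bv
  | all y A | ex y A => insert y A.bv

def varBound : Fm L → ℕ
  | falsum => 0
  | equal t₁ t₂ => max t₁.varBound t₂.varBound
  | rel _ ts => Finset.univ.sup fun i => (ts i).varBound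
  | and A B | or A B | imp A B => max A.varBound B.varBound
  | all y A | ex y A => max (y + 1) A.varBound

theorem notMem_freeVars_of_varBound_le {A : Fm L} {w : ℕ} (h : A.varBound ≤ w) :
    w ∉ A.freeVars := by
  induction A with
  | falsum => simp [freeVars]
  | equal t₁ t₂ =>
    simp only [varBound, max_le_iff] at h
    simp [freeVars, tCount_eq_zero_of_varBound_le h.1, tCount_eq_zero_of_varBound_le h.2]
  | rel R ts =>
    simp only [varBound, Finset.sup_le_iff, Finset.mem_univ, true_implies] at h
    simp [freeVars, fun i => tCount_eq_zero_of_varBound_le (h i)]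
  | and A B ihA ihB | or A B ihA ihB | imp A B ihA ihB =>
    simp only [varBound, max_le_iff] at h
    simp [freeVars, ihA h.1, ihB h.2]
  | all y A ih | ex y A ih =>
    simp only [varBound, max_le_iff] at h
    simp [freeVars, ih h.2]

theorem notMem_bv_of_varBound_le {A : Fm L} {w : ℕ} (h : A.varBound ≤ w) : w ∉ A.bv := by
  induction A with
  | falsum | equal _ _ | rel _ _ => simp [bv]
  | and A B ihA ihB | or A B ihA ihB | imp A B ihA ihB =>
    simp only [varBound, max_le_iff] at h
    simp [bv, ihA h.1, ihB h.2]
  | all y A ih | ex y A ih =>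
    simp only [varBound, max_le_iff] at h
    simp only [bv, Set.mem_insert_iff, not_or]
    exact ⟨by omega, ih h.2⟩

theorem exists_fresh (Γ Δ : Multiset (Fm L)) :
    ∃ z, (∀ C ∈ Γ, z ∉ C.freeVars ∧ z ∉ C.bv) ∧ ∀ C ∈ Δ, z ∉ C.freeVars ∧ z ∉ C.bv := by
  set z := ((Γ + Δ).map varBound).sup
  have fresh : ∀ C ∈ Γ + Δ, z ∉ C.freeVars ∧ z ∉ C.bv := fun C hC => by
    have h := Multiset.le_sup (Multiset.mem_map_of_mem varBound hC)
    exact ⟨notMem_freeVars_of_varBound_le h, notMem_bv_of_varBound_le h⟩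
  exact ⟨_, fun C hC => fresh C (Multiset.mem_add.2 (.inl hC)),
    fun C hC => fresh C (Multiset.mem_add.2 (.inr hC))⟩

theorem bv_ssub (A : Fm L) (σ : ℕ → L.Term ℕ) : (A.ssub σ).bv = A.bv := by
  induction A generalizing σ with
  | falsum | equal _ _ | rel _ _ => rfl
  | and A B ihA ihB | or A B ihA ihB | imp A B ihA ihB => simp [ssub, bv, ihA, ihB]
  | all y A ih | ex y A ih => simp [ssub, bv, ih]

theorem IsAtomic.ssub {P : Fm L} (hP : P.IsAtomic) (σ : ℕ → L.Term ℕ) : (P.ssub σ).IsAtomic := by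
  cases hP <;> constructor

theorem IsAtomic.freeFor {P : Fm L} (hP : P.IsAtomic) (t : L.Term ℕ) (x : ℕ) :
    P.freeFor t x := by
  cases hP <;> trivial

theorem IsAtomic.mem_freeVars_ssub {P : Fm L} (hP : P.IsAtomic) {σ : ℕ → L.Term ℕ} {w z : ℕ}
    (hw : w ∈ P.freeVars) (hz : tCount z (σ w) ≠ 0) : z ∈ (P.ssub σ).freeVars := by
  cases hP with
  | equal t₁ t₂ =>
    simp only [freeVars, Fm.ssub, Set.mem_ofPred_eq, tCount_subst_ne_zero] at hw ⊢
    exact hw.imp (⟨w, ·, hz⟩) (⟨w, ·, hz⟩)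
  | rel R ts =>
    simp only [freeVars, Fm.ssub, Set.mem_ofPred_eq, tCount_subst_ne_zero] at hw ⊢
    exact hw.imp fun _ hi => ⟨w, hi, hz⟩

theorem IsAtomic.ssub_ssub {P : Fm L} (hP : P.IsAtomic) (τ σ : ℕ → L.Term ℕ) :
    (P.ssub τ).ssub σ = P.ssub fun w => (τ w).subst σ := by
  cases hP <;> simp [Fm.ssub, Term.subst_subst]

theorem mem_freeVars_ssub {A : Fm L} {σ : ℕ → L.Term ℕ} {z : ℕ}
    (h : z ∈ (A.ssub σ).freeVars) : ∃ w ∈ A.freeVars, tCount z (σ w) ≠ 0 := by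
  induction A generalizing σ with
  | falsum => simp [ssub, freeVars] at h
  | equal t₁ t₂ =>
    simp only [freeVars, ssub, Set.mem_ofPred_eq, tCount_subst_ne_zero] at h
    rcases h with ⟨w, hw, hz⟩ | ⟨w, hw, hz⟩
    exacts [⟨w, Or.inl hw, hz⟩, ⟨w, Or.inr hw, hz⟩]
  | rel R ts =>
    simp only [freeVars, ssub, Set.mem_ofPred_eq, tCount_subst_ne_zero] at h
    obtain ⟨i, w, hw, hz⟩ := h
    exact ⟨w, ⟨i, hw⟩, hz⟩
  | and A B ihA ihB | or A B ihA ihB | imp A B ihA ihB =>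
    rcases h with h | h
    · obtain ⟨w, hw, hz⟩ := ihA h; exact ⟨w, Or.inl hw, hz⟩
    · obtain ⟨w, hw, hz⟩ := ihB h; exact ⟨w, Or.inr hw, hz⟩
  | all y A ih | ex y A ih =>
    obtain ⟨h, hzy⟩ := h
    obtain ⟨w, hw, hz⟩ := ih h
    have hwy : w ≠ y := by rintro rfl; simp_all
    exact ⟨w, ⟨hw, hwy⟩, by rwa [update_of_ne hwy] at hz⟩

theorem ssub_congr {A : Fm L} {σ τ : ℕ → L.Term ℕ} (h : ∀ w ∈ A.freeVars, σ w = τ w) :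
    A.ssub σ = A.ssub τ := by
  induction A generalizing σ τ with
  | falsum => rfl
  | equal t₁ t₂ =>
    simp only [ssub, equal.injEq]
    exact ⟨subst_congr fun w hw => h w (Or.inl hw), subst_congr fun w hw => h w (Or.inr hw)⟩
  | rel R ts =>
    simp only [ssub, rel.injEq, heq_eq_eq, true_and]
    exact funext fun i => subst_congr fun w hw => h w ⟨i, hw⟩
  | and A B ihA ihB | or A B ihA ihB | imp A B ihA ihB =>
    simp only [ssub]
    congr 1
    exacts [ihA fun w hw => h w (Or.inl hw), ihB fun w hw => h w (Or.inr hw)]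
  | all y A ih | ex y A ih =>
    simp only [ssub]
    congr 1
    refine ih fun w hw => ?_
    rcases eq_or_ne w y with rfl | hwy
    · simp
    · simpa [update_of_ne hwy] using h w ⟨hw, hwy⟩

theorem ssub_var (A : Fm L) : A.ssub Term.var = A := by
  induction A with
  | falsum => rfl
  | equal t₁ t₂ => simp [ssub, Term.subst_var]
  | rel R ts => simp [ssub, Term.subst_var]
  | and A B ihA ihB | or A B ihA ihB | imp A B ihA ihB => simp [ssub, ihA, ihB]
  | all y A ih | ex y A ih => simp [ssub, update_eq_self, ih]

theorem subst_of_notMem_freeVars {A : Fm L} {x : ℕ} (t : L.Term ℕ) (h : x ∉ A.freeVars) :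
    A.subst x t = A := by
  refine (ssub_congr fun w hw => ?_).trans (ssub_var A)
  exact update_of_ne (by rintro rfl; exact h hw) _ _

theorem subst_ssub {A : Fm L} {x : ℕ} {u : L.Term ℕ} (σ : ℕ → L.Term ℕ) (hf : A.freeFor u x) :
    (A.subst x u).ssub σ = A.ssub (update σ x (u.subst σ)) := by
  induction A generalizing σ with
  | falsum => rfl
  | equal t₁ t₂ => simp only [subst, ssub, subst_update_subst]
  | rel R ts => simp only [subst, ssub, subst_update_subst]
  | and A B ihA ihB | or A B ihA ihB | imp A B ihA ihB =>
    simp only [subst, ssub] at ihA ihB ⊢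
    rw [ihA _ hf.1, ihB _ hf.2]
  | all y A ih | ex y A ih =>
    rcases eq_or_ne x y with rfl | hxy
    · simp [subst, ssub, update_idem, update_eq_self, ssub_var]
    rcases hf with h | hx | ⟨hyu, hf⟩
    · exact absurd h hxy
    · rw [subst_of_notMem_freeVars u]
      · exact ssub_congr fun w hw => (update_of_ne (by rintro rfl; exact hx hw.1) _ _).symm
      · exact fun h => hx h.1
    · have hu : u.subst (update σ y (var y)) = u.subst σ :=
        subst_congr fun w hw => update_of_ne (by rintro rfl; exact hw hyu) _ _
      simp only [subst, ssub] at ih ⊢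
      rw [update_comm hxy, update_eq_self, ih _ hf, hu, update_comm hxy]

theorem ssub_update_subst (A : Fm L) {y : ℕ} (u : L.Term ℕ) {σ : ℕ → L.Term ℕ}
    (hσ : ∀ w ≠ y, tCount y (σ w) = 0) :
    (A.ssub (update σ y (var y))).subst y u = A.ssub (update σ y u) := by
  induction A generalizing σ with
  | falsum => rfl
  | equal t₁ t₂ => simp only [subst, ssub, subst_update_var_subst _ _ hσ]
  | rel R ts => simp only [subst, ssub, subst_update_var_subst _ _ hσ]
  | and A B ihA ihB | or A B ihA ihB | imp A B ihA ihB =>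
    simp only [subst, ssub] at ihA ihB ⊢
    rw [ihA hσ, ihB hσ]
  | all z A ih | ex z A ih =>
    rcases eq_or_ne z y with rfl | hzy
    · simp [subst, ssub, update_idem, update_eq_self, ssub_var]
    have hσz : ∀ w ≠ y, tCount y (update σ z (var z) w) = 0 := fun w hw => by
      rcases eq_or_ne w z with rfl | hwz
      · simpa using hzy
      · simpa [update_of_ne hwz] using hσ w hw
    have hvar : update (update var y u) z (var z) = update var y u :=
      update_eq_self_iff.2 (update_of_ne hzy _ _).symm
    simp only [subst, ssub] at ih ⊢
    rw [hvar, update_comm (Ne.symm hzy), ih hσz, update_comm hzy]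

def CaptureFree (σ : ℕ → L.Term ℕ) : Fm L → Prop
  | falsum | equal _ _ | rel _ _ => True
  | and A B | or A B | imp A B => A.CaptureFree σ ∧ B.CaptureFree σ
  | all y A | ex y A => (∀ w ≠ y, tCount y (σ w) = 0) ∧ A.CaptureFree σ

theorem IsAtomic.captureFree {P : Fm L} (hP : P.IsAtomic) (σ : ℕ → L.Term ℕ) :
    P.CaptureFree σ := by
  cases hP <;> trivial

theorem captureFree_var (A : Fm L) : A.CaptureFree Term.var := by
  induction A with
  | falsum | equal _ _ | rel _ _ => trivial
  | and A B ihA ihB | or A B ihA ihB | imp A B ihA ihB => exact ⟨ihA, ihB⟩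
  | all y A ih | ex y A ih => exact ⟨fun w hw => by simpa using hw, ih⟩

@[simp]
theorem captureFree_ssub (A : Fm L) (σ τ : ℕ → L.Term ℕ) :
    (A.ssub τ).CaptureFree σ ↔ A.CaptureFree σ := by
  induction A generalizing τ with
  | falsum | equal _ _ | rel _ _ => rfl
  | and A B ihA ihB | or A B ihA ihB | imp A B ihA ihB => simp [ssub, CaptureFree, ihA, ihB]
  | all y A ih | ex y A ih => simp [ssub, CaptureFree, ih]

@[simp]
theorem captureFree_subst (A : Fm L) (σ : ℕ → L.Term ℕ) (x : ℕ) (t : L.Term ℕ) :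
    (A.subst x t).CaptureFree σ ↔ A.CaptureFree σ :=
  captureFree_ssub A σ _

theorem CaptureFree.update_var {A : Fm L} {σ : ℕ → L.Term ℕ} (h : A.CaptureFree σ) {y z : ℕ}
    (hz : z ∉ A.bv ∨ z = y) : A.CaptureFree (update σ y (var z)) := by
  induction A with
  | falsum | equal _ _ | rel _ _ => trivial
  | and A B ihA ihB | or A B ihA ihB | imp A B ihA ihB =>
    obtain ⟨hA, hB⟩ := h
    exact ⟨ihA hA (hz.imp_left fun h hb => h (Or.inl hb)),
      ihB hB (hz.imp_left fun h hb => h (Or.inr hb))⟩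
  | all x A ih | ex x A ih =>
    obtain ⟨hx, hA⟩ := h
    refine ⟨fun w hw => ?_, ih hA (hz.imp_left fun h hb => h (Or.inr hb))⟩
    rcases eq_or_ne w y with rfl | hwy
    · rcases hz with hz | rfl
      · simpa using fun h => hz (Or.inl h)
      · simpa using hw
    · simpa [update_of_ne hwy] using hx w hw

theorem freeFor_var_of_notMem_bv {A : Fm L} {z : ℕ} (x : ℕ) (h : z ∉ A.bv) :
    A.freeFor (var z) x := by
  induction A with
  | falsum | equal _ _ | rel _ _ => trivial
  | and A B ihA ihB | or A B ihA ihB | imp A B ihA ihB =>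
    exact ⟨ihA fun hc => h (Or.inl hc), ihB fun hc => h (Or.inr hc)⟩
  | all y A ih | ex y A ih =>
    exact Or.inr (Or.inr ⟨by simpa using fun hzy => h (Or.inl hzy),
      ih fun hc => h (Or.inr hc)⟩)

theorem subst_var_ssub_update {A : Fm L} {x y : ℕ} (z : ℕ) {σ : ℕ → L.Term ℕ}
    (hf : A.freeFor (var y) x) (hy : y ∉ A.freeVars \ {x}) (hx : ∀ w ≠ x, tCount x (σ w) = 0) :
    (A.subst x (var y)).ssub (update σ y (var z))
      = (A.ssub (update σ x (var x))).subst x (var z) := by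
  rw [subst_ssub _ hf, ssub_update_subst A _ hx]
  refine ssub_congr fun w hw => ?_
  rcases eq_or_ne w x with rfl | hwx
  · simp
  · have hwy : w ≠ y := by rintro rfl; exact hy ⟨hw, hwx⟩
    simp [update_of_ne hwx, update_of_ne hwy]

theorem map_ssub_update_of_notMem {Γ : Multiset (Fm L)} {y : ℕ} (σ : ℕ → L.Term ℕ)
    (t : L.Term ℕ) (h : ∀ C ∈ Γ, y ∉ C.freeVars) :
    Γ.map (ssub (update σ y t)) = Γ.map (ssub σ) :=
  Multiset.map_congr rfl fun C hC =>
    ssub_congr fun w hw => update_of_ne (by rintro rfl; exact h C hC hw) _ _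

theorem freeFor_ssub {A : Fm L} {x : ℕ} {t : L.Term ℕ} {σ : ℕ → L.Term ℕ} (hf : A.freeFor t x)
    (hx : ∀ w ≠ x, tCount x (σ w) = 0) (hσ : A.CaptureFree σ) :
    (A.ssub (update σ x (var x))).freeFor (t.subst σ) x := by
  induction A generalizing σ with
  | falsum | equal _ _ | rel _ _ => trivial
  | and A B ihA ihB | or A B ihA ihB | imp A B ihA ihB =>
    obtain ⟨hfA, hfB⟩ := hf
    obtain ⟨hA, hB⟩ := hσ
    exact ⟨ihA hfA hx hA, ihB hfB hx hB⟩
  | all z A ih | ex z A ih =>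
    obtain ⟨hz, hA⟩ := hσ
    rcases eq_or_ne x z with rfl | hxz
    · exact Or.inl rfl
    rcases hf with h | hxA | ⟨htz, hfA⟩
    · exact absurd h hxz
    · refine Or.inr (Or.inl fun hc => ?_)
      obtain ⟨w, hw, hxw⟩ := mem_freeVars_ssub hc
      have hwx : w ≠ x := by rintro rfl; exact hxA hw
      rcases eq_or_ne w z with rfl | hwz
      · simp [Ne.symm hxz] at hxw
      · simp [update_of_ne hwz, update_of_ne hwx, hx w hwx] at hxw
    · have hxz' : ∀ w ≠ x, tCount x (update σ z (var z) w) = 0 := fun w hw => by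
        rcases eq_or_ne w z with rfl | hwz
        · simpa using Ne.symm hxz
        · simpa [update_of_ne hwz] using hx w hw
      have ht : t.subst σ = t.subst (update σ z (var z)) :=
        subst_congr fun w hw => (update_of_ne (by rintro rfl; exact hw htz) _ _).symm
      refine Or.inr (Or.inr ⟨by_contra fun hc => ?_, ?_⟩)
      · obtain ⟨w, hw, hzw⟩ := tCount_subst_ne_zero.1 hc
        exact hzw (hz w (by rintro rfl; exact hw htz))
      · rw [update_comm hxz, ht]
        exact ih hfA hxz' (hA.update_var (Or.inr rfl))

end Fm

section

open Function Fm

theorem ReplFull.mem_or_isAtomic {Γp Γc : Multiset (Fm L)} (h : ReplFull L Γp Γc) {C : Fm L}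
    (hC : C ∈ Γp) : C ∈ Γc ∨ C.IsAtomic := by
  obtain ⟨s, r, v, P, Γ, hP, -, -, rfl, rfl⟩ := h
  simp only [Multiset.mem_cons] at hC ⊢
  rcases hC with rfl | rfl | rfl | hC
  exacts [Or.inl (Or.inl rfl), Or.inl (Or.inr (Or.inl rfl)), Or.inr (hP.ssub _),
    Or.inl (Or.inr (Or.inr hC))]

theorem ReplFull.add_map_ssub {Γp Γc : Multiset (Fm L)} (h : ReplFull L Γp Γc)
    (σ : ℕ → L.Term ℕ) (Θ : Multiset (Fm L)) :
    ReplFull L (Θ + Γp.map (ssub σ)) (Θ + Γc.map (ssub σ)) := by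
  obtain ⟨s, r, v, P, Γ, hP, -, -, rfl, rfl⟩ := h
  -- `σ` may move `v` itself, so the replaced position is marked by a fresh `v₀` instead
  obtain ⟨v₀, hv₀, hv₀P⟩ := exists_fresh {(Fm.equal s r).ssub σ} {P.ssub σ}
  simp only [Multiset.mem_singleton, forall_eq] at hv₀ hv₀P
  have hsr : tCount v₀ (s.subst σ) = 0 ∧ tCount v₀ (r.subst σ) = 0 := by
    simpa [freeVars, Fm.ssub] using hv₀.1
  have hσ : ∀ w ∈ P.freeVars, tCount v₀ (σ w) = 0 := fun w hw =>
    by_contra fun h => hv₀P.1 (hP.mem_freeVars_ssub hw h)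
  have hsubst : ∀ u : L.Term ℕ,
      (P.subst v u).ssub σ = (P.ssub (update σ v (Term.var v₀))).subst v₀ (u.subst σ) := by
    intro u
    rw [subst_ssub σ (hP.freeFor u v), Fm.subst, hP.ssub_ssub]
    refine ssub_congr fun w hw => ?_
    rcases eq_or_ne w v with rfl | hwv
    · simp
    · simp [update_of_ne hwv, Term.subst_update_of_tCount_eq_zero (hσ w hw)]
  refine ⟨s.subst σ, r.subst σ, v₀, P.ssub (update σ v (Term.var v₀)), Θ + Γ.map (Fm.ssub σ),
    hP.ssub _, hsr.1, hsr.2, ?_, ?_⟩ <;>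
  simp [Multiset.add_cons, hsubst, Fm.ssub]

def SubstStable (n : ℕ) (Γ Δ : Multiset (Fm L)) : Prop :=
  ∀ (σ : ℕ → L.Term ℕ) (Θ : Multiset (Fm L)), (∀ C ∈ Γ, C.CaptureFree σ) →
    (∀ C ∈ Δ, C.CaptureFree σ) → DerC (ReplFull L) n (Θ + Γ.map (ssub σ)) (Δ.map (ssub σ))

theorem SubstStable.allR {m x y : ℕ} {Γ Δ : Multiset (Fm L)} {A : Fm L}
    (hf : A.freeFor (var y) x) (hy : y ∉ (all x A).freeVars) (hΓy : ∀ C ∈ Γ, y ∉ C.freeVars)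
    (hΔy : ∀ C ∈ Δ, y ∉ C.freeVars) (ih : SubstStable m Γ (A.subst x (var y) ::ₘ Δ)) :
    SubstStable (m + 1) Γ (all x A ::ₘ Δ) := by
  intro σ Θ hΓ hΔ
  obtain ⟨⟨hx, hA⟩, hΔ⟩ := Multiset.forall_mem_cons.1 hΔ
  obtain ⟨z, hzΓ, hzΔ⟩ := exists_fresh (Θ + Γ.map (ssub σ)) ((all x A ::ₘ Δ).map (ssub σ))
  simp only [Multiset.map_cons, Multiset.forall_mem_cons, Multiset.forall_mem_map_iff,
    bv_ssub] at hzΔ ⊢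
  obtain ⟨⟨hzA, hzAbv⟩, hzΔ⟩ := hzΔ
  have hzA' : z ∉ A.bv := fun h => hzAbv (Or.inr h)
  have hzbv : ∀ C ∈ Γ, z ∉ C.bv := fun C hC => by
    simpa [bv_ssub] using (hzΓ _ (Multiset.mem_add.2 (.inr (Multiset.mem_map_of_mem _ hC)))).2
  have d := ih (update σ y (var z)) Θ (fun C hC => (hΓ C hC).update_var (.inl (hzbv C hC)))
    (Multiset.forall_mem_cons.2 ⟨(captureFree_subst ..).2 (hA.update_var (.inl hzA')),
      fun C hC => (hΔ C hC).update_var (.inl (hzΔ C hC).2)⟩)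
  rw [map_ssub_update_of_notMem _ _ hΓy, Multiset.map_cons, map_ssub_update_of_notMem _ _ hΔy,
    subst_var_ssub_update z hf hy hx] at d
  exact DerC.allR (freeFor_var_of_notMem_bv x (by rwa [bv_ssub])) hzA
    (fun C hC => (hzΓ C hC).1) (Multiset.forall_mem_map_iff.2 fun C hC => (hzΔ C hC).1) d

theorem SubstStable.exL {m x y : ℕ} {Γ Δ : Multiset (Fm L)} {A : Fm L}
    (hf : A.freeFor (var y) x) (hy : y ∉ (ex x A).freeVars) (hΓy : ∀ C ∈ Γ, y ∉ C.freeVars)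
    (hΔy : ∀ C ∈ Δ, y ∉ C.freeVars) (ih : SubstStable m (A.subst x (var y) ::ₘ Γ) Δ) :
    SubstStable (m + 1) (ex x A ::ₘ Γ) Δ := by
  intro σ Θ hΓ hΔ
  obtain ⟨⟨hx, hA⟩, hΓ⟩ := Multiset.forall_mem_cons.1 hΓ
  obtain ⟨z, hzΓ, hzΔ⟩ := exists_fresh (Θ + (ex x A ::ₘ Γ).map (ssub σ)) (Δ.map (ssub σ))
  simp only [Multiset.map_cons, Multiset.add_cons, Multiset.forall_mem_cons, bv_ssub] at hzΓ ⊢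
  obtain ⟨⟨hzA, hzAbv⟩, hzΓ⟩ := hzΓ
  have hzA' : z ∉ A.bv := fun h => hzAbv (Or.inr h)
  have hzbv : ∀ C ∈ Γ, z ∉ C.bv := fun C hC => by
    simpa [bv_ssub] using (hzΓ _ (Multiset.mem_add.2 (.inr (Multiset.mem_map_of_mem _ hC)))).2
  have d := ih (update σ y (var z)) Θ
    (Multiset.forall_mem_cons.2 ⟨(captureFree_subst ..).2 (hA.update_var (.inl hzA')),
      fun C hC => (hΓ C hC).update_var (.inl (hzbv C hC))⟩)
    (fun C hC => (hΔ C hC).update_var (.inl (by simpa [bv_ssub] using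
      (hzΔ _ (Multiset.mem_map_of_mem _ hC)).2)))
  rw [Multiset.map_cons, Multiset.add_cons, map_ssub_update_of_notMem _ _ hΓy,
    map_ssub_update_of_notMem _ _ hΔy, subst_var_ssub_update z hf hy hx] at d
  exact DerC.exL (freeFor_var_of_notMem_bv x (by rwa [bv_ssub])) hzA
    (fun C hC => (hzΓ C hC).1) (fun C hC => (hzΔ C hC).1) d

theorem DerC.substStable {n : ℕ} {Γ Δ : Multiset (Fm L)} (d : DerC (ReplFull L) n Γ Δ) :
    SubstStable n Γ Δ := by
  induction d with
  | ax hP =>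
    intro σ Θ _ _
    simp only [Multiset.map_cons, Multiset.add_cons]
    exact DerC.ax (hP.ssub σ)
  | botL =>
    intro σ Θ _ _
    simp only [Multiset.map_cons, Multiset.add_cons]
    exact DerC.botL
  | andL _ ih =>
    intro σ Θ hΓ hΔ
    have d := ih σ Θ (by simp_all [CaptureFree]) hΔ
    simp only [Multiset.map_cons, Multiset.add_cons] at d ⊢
    exact DerC.andL d
  | andR _ _ ih₁ ih₂ =>
    intro σ Θ hΓ hΔ
    have d₁ := ih₁ σ Θ hΓ (by simp_all [CaptureFree])
    have d₂ := ih₂ σ Θ hΓ (by simp_all [CaptureFree])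
    simp only [Multiset.map_cons] at d₁ d₂ ⊢
    exact DerC.andR d₁ d₂
  | orL _ _ ih₁ ih₂ =>
    intro σ Θ hΓ hΔ
    have d₁ := ih₁ σ Θ (by simp_all [CaptureFree]) hΔ
    have d₂ := ih₂ σ Θ (by simp_all [CaptureFree]) hΔ
    simp only [Multiset.map_cons, Multiset.add_cons] at d₁ d₂ ⊢
    exact DerC.orL d₁ d₂
  | orR _ ih =>
    intro σ Θ hΓ hΔ
    have d := ih σ Θ hΓ (by simp_all [CaptureFree])
    simp only [Multiset.map_cons] at d ⊢
    exact DerC.orR d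
  | impL _ _ ih₁ ih₂ =>
    intro σ Θ hΓ hΔ
    have d₁ := ih₁ σ Θ (by simp_all [CaptureFree]) (by simp_all [CaptureFree])
    have d₂ := ih₂ σ Θ (by simp_all [CaptureFree]) hΔ
    simp only [Multiset.map_cons, Multiset.add_cons] at d₁ d₂ ⊢
    exact DerC.impL d₁ d₂
  | impR _ ih =>
    intro σ Θ hΓ hΔ
    have d := ih σ Θ (by simp_all [CaptureFree]) (by simp_all [CaptureFree])
    simp only [Multiset.map_cons, Multiset.add_cons] at d ⊢
    exact DerC.impR d
  | @allL _ _ _ _ _ A hf _ ih =>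
    intro σ Θ hΓ hΔ
    obtain ⟨⟨hx, hA⟩, -⟩ := Multiset.forall_mem_cons.1 hΓ
    have d := ih σ Θ (by simp_all [CaptureFree]) hΔ
    simp only [Multiset.map_cons, Multiset.add_cons] at d ⊢
    rw [subst_ssub σ hf, ← ssub_update_subst A _ hx] at d
    exact DerC.allL (freeFor_ssub hf hx hA) d
  | @exR _ _ _ _ _ A hf _ ih =>
    intro σ Θ hΓ hΔ
    obtain ⟨⟨hx, hA⟩, -⟩ := Multiset.forall_mem_cons.1 hΔ
    have d := ih σ Θ hΓ (by simp_all [CaptureFree])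
    simp only [Multiset.map_cons] at d ⊢
    rw [subst_ssub σ hf, ← ssub_update_subst A _ hx] at d
    exact DerC.exR (freeFor_ssub hf hx hA) d
  | allR hf hy hΓy hΔy _ ih => exact ih.allR hf hy hΓy hΔy
  | exL hf hy hΓy hΔy _ ih => exact ih.exL hf hy hΓy hΔy
  | ref t _ ih =>
    intro σ Θ hΓ hΔ
    have d := ih σ Θ (by simp_all [CaptureFree]) hΔ
    simp only [Multiset.map_cons, Multiset.add_cons] at d
    exact DerC.ref _ d
  | repl h _ ih =>
    intro σ Θ hΓ hΔ
    exact DerC.repl (h.add_map_ssub σ Θ)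
      (ih σ Θ (fun C hC => (h.mem_or_isAtomic hC).elim (hΓ C) (·.captureFree σ)) hΔ)

end

theorem DerC.weaken {n : ℕ} {Γ Δ : Multiset (Fm L)} (d : DerC (ReplFull L) n Γ Δ) (A : Fm L) :
    DerC (ReplFull L) n (A ::ₘ Γ) Δ := by
  have hvar : Fm.ssub (Term.var : ℕ → L.Term ℕ) = id := funext Fm.ssub_var
  simpa [hvar] using d.substStable Term.var {A} (fun C _ => C.captureFree_var)
    (fun C _ => C.captureFree_var)

/-- The rule Repl⁻ is admissible in `G3c^=`: for atomic `P` and `v` not occurring in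
`s`, `r`, if `s = r, P[v/r], Γ ⇒ Δ` is derivable then so is `s = r, P[v/s], Γ ⇒ Δ`. -/
theorem replMinus_admissible_G3cEq (L : FirstOrder.Language.{u, v})
    (P : Fm L) (hP : P.IsAtomic) (v : ℕ)
    (s r : L.Term ℕ) (hs : tCount v s = 0) (hr : tCount v r = 0)
    (Γ Δ : Multiset (Fm L))
    (hd : ∃ n, DerC (ReplFull L) n (Fm.equal s r ::ₘ P.subst v r ::ₘ Γ) Δ) :
    ∃ n, DerC (ReplFull L) n (Fm.equal s r ::ₘ P.subst v s ::ₘ Γ) Δ := by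
  obtain ⟨n, d⟩ := hd
  refine ⟨n + 1, DerC.repl ⟨s, r, v, P, Γ, hP, hs, hr, rfl, rfl⟩ ?_⟩
  rw [Multiset.cons_swap]
  exact d.weaken (P.subst v s)
end

section
/- Every sequent derivable in G3c^= is derivable in G3c^=⁻; the translation is obtained by replacing each application of Repl, using the admissibility of Repl in G3c^=⁻, by induction on the height of the given derivation. -/
open FirstOrder Language Multiset

universe u v

variable {L : FirstOrder.Language.{u, v}}

/-!
Every atom that `Repl` adds to an antecedent `Γ` lies in the equational closure of `Γ`: the
atoms obtained from those of `Γ` by reflexivity and replacement. So we transform, rule by rule,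
a `G3c^=` derivation of `Γ + D ⇒ Δ` with `D` inside the closure of `Γ` into a `G3c^=⁻`
derivation of `Γ ⇒ Δ`: `Repl` just moves its new atom into `D`, and `D` matters only at
axioms, where the principal atom is first built in the antecedent by `Ref` and `Repl⁻`
inferences that follow its closure derivation. As `Repl⁻` consumes the atom it rewrites, an
equation needed as a side premiss is first duplicated.
-/

open Relation

namespace Fm

def IsEquation (Q : Fm L) : Prop := ∃ a b, Q = Fm.equal a b

lemma IsAtomic.subst {P : Fm L} (hP : P.IsAtomic) (v : ℕ) (t : L.Term ℕ) :
    (P.subst v t).IsAtomic := by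
  cases hP <;> constructor

lemma isEquation_subst_iff {P : Fm L} {v : ℕ} {t : L.Term ℕ} :
    (P.subst v t).IsEquation ↔ P.IsEquation := by
  cases P <;> simp [IsEquation, subst, ssub]

end Fm

lemma tCount_eq_zero_of_notMem_varFinset {t : L.Term ℕ} {w : ℕ} (h : w ∉ t.varFinset) :
    tCount w t = 0 := by
  induction t with
  | var v => simp_all [tCount, Term.varFinset, eq_comm]
  | func f ts ih => simp_all [tCount, Term.varFinset]

lemma Term.subst_update_of_tCount_eq_zero {t u : L.Term ℕ} {v : ℕ} (h : tCount v t = 0) :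
    t.subst (Function.update Term.var v u) = t := by
  induction t with
  | var w => simp_all [tCount, Term.subst]
  | func f ts ih => simp_all [tCount, Term.subst]

inductive EqClosure (Γ : Multiset (Fm L)) : Fm L → Prop where
  | mem {A : Fm L} (h : A ∈ Γ) (hA : A.IsAtomic) : EqClosure Γ A
  | refl (t : L.Term ℕ) : EqClosure Γ (Fm.equal t t)
  | repl {s r : L.Term ℕ} {v : ℕ} {P : Fm L} (hP : P.IsAtomic) (hs : tCount v s = 0)
      (hr : tCount v r = 0) :
      EqClosure Γ (Fm.equal s r) → EqClosure Γ (P.subst v s) → EqClosure Γ (P.subst v r)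

namespace EqClosure

variable {Γ Γ' D : Multiset (Fm L)} {A C : Fm L}

lemma isAtomic (h : EqClosure Γ A) : A.IsAtomic := by
  induction h with
  | mem _ hA => exact hA
  | refl t => exact .equal t t
  | repl hP => exact hP.subst _ _

lemma mono (hΓ : Γ ⊆ Γ') (h : EqClosure Γ A) : EqClosure Γ' A := by
  induction h with
  | mem h hA => exact mem (hΓ h) hA
  | refl t => exact refl t
  | repl hP hs hr _ _ ihe ihp => exact repl hP hs hr ihe ihp

lemma cons (h : EqClosure Γ A) : EqClosure (C ::ₘ Γ) A :=
  h.mono (Multiset.subset_cons Γ C)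

lemma of_cons (hC : ¬C.IsAtomic) (h : EqClosure (C ::ₘ Γ) A) : EqClosure Γ A := by
  induction h with
  | mem h hA =>
    refine mem ((Multiset.mem_cons.mp h).resolve_left ?_) hA
    rintro rfl
    exact hC hA
  | refl t => exact refl t
  | repl hP hs hr _ _ ihe ihp => exact repl hP hs hr ihe ihp

lemma of_mem_add (h : A ∈ Γ + D) (hA : A.IsAtomic) (hD : ∀ a ∈ D, EqClosure Γ a) :
    EqClosure Γ A :=
  (Multiset.mem_add.mp h).elim (mem · hA) (hD A)

end EqClosure

/-- An inference of `Ref` or `Repl⁻`, read upwards: from the antecedent of its conclusion to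
the antecedent of its premiss. -/
inductive RefReplStep : Multiset (Fm L) → Multiset (Fm L) → Prop where
  | ref (t : L.Term ℕ) (Γ : Multiset (Fm L)) : RefReplStep Γ (Fm.equal t t ::ₘ Γ)
  | repl {s r : L.Term ℕ} {v : ℕ} {P : Fm L} (hP : P.IsAtomic) (hs : tCount v s = 0)
      (hr : tCount v r = 0) (Γ : Multiset (Fm L)) :
      RefReplStep (Fm.equal s r ::ₘ P.subst v s ::ₘ Γ) (Fm.equal s r ::ₘ P.subst v r ::ₘ Γ)

namespace RefReplStep

variable {Γ Γ' Δ : Multiset (Fm L)}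

lemma add_right (h : RefReplStep Γ Γ') (C : Multiset (Fm L)) :
    RefReplStep (Γ + C) (Γ' + C) := by
  cases h <;> simp only [Multiset.cons_add] <;> constructor <;> assumption

lemma reflTransGen_add_right (h : ReflTransGen RefReplStep Γ Γ') (C : Multiset (Fm L)) :
    ReflTransGen RefReplStep (Γ + C) (Γ' + C) :=
  h.lift (· + C) fun _ _ h => h.add_right C

lemma exists_derC_of_reflTransGen (h : ReflTransGen RefReplStep Γ Γ')
    (hd : ∃ n, DerC (ReplMinus L) n Γ' Δ) : ∃ n, DerC (ReplMinus L) n Γ Δ := by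
  induction h with
  | refl => exact hd
  | tail _ hstep ih =>
    obtain ⟨n, d⟩ := hd
    refine ih ⟨n + 1, ?_⟩
    cases hstep with
    | ref t => exact .ref t d
    | repl hP hs hr Γ => exact .repl ⟨_, _, _, _, Γ, hP, hs, hr, rfl, rfl⟩ d

end RefReplStep

section Materialize

variable {Γ Γ₀ : Multiset (Fm L)} {Q : Fm L}

lemma reflTransGen_cons_equal_self (a b : L.Term ℕ) (Γ : Multiset (Fm L)) :
    ReflTransGen RefReplStep (Fm.equal a b ::ₘ Γ) (Fm.equal a b ::ₘ Fm.equal a b ::ₘ Γ) := by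
  classical
  obtain ⟨v, hv⟩ := Infinite.exists_notMem_finset (a.varFinset ∪ b.varFinset)
  rw [Finset.mem_union, not_or] at hv
  have ha := tCount_eq_zero_of_notMem_varFinset hv.1
  -- `Ref` adds `a = a`, which `Repl⁻` on `P := (a = v)`, with `v` fresh, turns into `a = b`.
  have hrepl := RefReplStep.repl (P := Fm.equal a (.var v)) (.equal _ _) ha
    (tCount_eq_zero_of_notMem_varFinset hv.2) Γ
  simp only [Fm.subst, Fm.ssub, Term.subst_update_of_tCount_eq_zero ha, Term.subst,
    Function.update_self] at hrepl
  refine .tail (.single ?_) hrepl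
  rw [Multiset.cons_swap]
  exact .ref a _

lemma reflTransGen_cons_subst {s r : L.Term ℕ} {v : ℕ} {P : Fm L} {J Γ₂ : Multiset (Fm L)}
    (hP : P.IsAtomic) (hs : tCount v s = 0) (hr : tCount v r = 0)
    (he : ReflTransGen RefReplStep Γ (Fm.equal s r ::ₘ (Γ + J)))
    (hp : ReflTransGen RefReplStep Γ (P.subst v s ::ₘ Γ₂)) :
    ReflTransGen RefReplStep Γ (P.subst v r ::ₘ Fm.equal s r ::ₘ (Γ₂ + J)) := by
  rw [← Multiset.add_cons] at he
  have hstep := RefReplStep.repl hP hs hr (Γ₂ + J)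
  rw [Multiset.cons_swap (P.subst v r)]
  refine (he.trans ?_).tail hstep
  simpa only [Multiset.cons_add, Multiset.add_cons, Multiset.cons_swap (P.subst v s)] using
    RefReplStep.reflTransGen_add_right hp (Fm.equal s r ::ₘ J)

lemma EqClosure.exists_reflTransGen_cons_add (h : EqClosure Γ₀ Q) (hQ : Q.IsEquation)
    (hΓ : Γ₀ ⊆ Γ) : ∃ J, ReflTransGen RefReplStep Γ (Q ::ₘ (Γ + J)) := by
  induction h with
  | mem hmem =>
    obtain ⟨a, b, rfl⟩ := hQ
    obtain ⟨Γ', rfl⟩ := Multiset.exists_cons_of_mem (hΓ hmem)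
    exact ⟨0, by simpa using reflTransGen_cons_equal_self a b Γ'⟩
  | refl t => exact ⟨0, by simpa using .single (RefReplStep.ref t Γ)⟩
  | @repl s r v P hP hs hr _ _ ihe ihp =>
    obtain ⟨J₁, he⟩ := ihe ⟨_, _, rfl⟩
    obtain ⟨J₂, hp⟩ := ihp (Fm.isEquation_subst_iff.mpr (Fm.isEquation_subst_iff.mp hQ))
    refine ⟨Fm.equal s r ::ₘ (J₂ + J₁), ?_⟩
    simpa only [add_assoc, ← Multiset.add_cons] using reflTransGen_cons_subst hP hs hr he hp

lemma EqClosure.exists_reflTransGen_cons (h : EqClosure Γ₀ Q) (hΓ : Γ₀ ⊆ Γ) :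
    ∃ Γ', ReflTransGen RefReplStep Γ (Q ::ₘ Γ') := by
  induction h with
  | mem hmem =>
    obtain ⟨Γ', rfl⟩ := Multiset.exists_cons_of_mem (hΓ hmem)
    exact ⟨Γ', .refl⟩
  | refl t => exact ⟨Γ, .single (.ref t Γ)⟩
  | repl hP hs hr he _ _ ihp =>
    obtain ⟨J, he⟩ := he.exists_reflTransGen_cons_add ⟨_, _, rfl⟩ hΓ
    obtain ⟨Γ₂, hp⟩ := ihp
    exact ⟨_, reflTransGen_cons_subst hP hs hr he hp⟩

lemma EqClosure.exists_derC (h : EqClosure Γ Q) (Δ : Multiset (Fm L)) :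
    ∃ n, DerC (ReplMinus L) n Γ (Q ::ₘ Δ) := by
  obtain ⟨Γ', hsteps⟩ := h.exists_reflTransGen_cons (Multiset.Subset.refl Γ)
  exact RefReplStep.exists_derC_of_reflTransGen hsteps ⟨0, .ax h.isAtomic⟩

end Materialize

namespace DerC

variable {rp : Multiset (Fm L) → Multiset (Fm L) → Prop} {n m : ℕ} {Γ Δ : Multiset (Fm L)}

lemma succ (h : DerC rp n Γ Δ) : DerC rp (n + 1) Γ Δ := by
  induction h with
  | ax hP => exact .ax hP
  | botL => exact .botL
  | andL _ ih => exact .andL ih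
  | andR _ _ ih₁ ih₂ => exact .andR ih₁ ih₂
  | orL _ _ ih₁ ih₂ => exact .orL ih₁ ih₂
  | orR _ ih => exact .orR ih
  | impL _ _ ih₁ ih₂ => exact .impL ih₁ ih₂
  | impR _ ih => exact .impR ih
  | allL hf _ ih => exact .allL hf ih
  | allR hf hy hΓ hΔ _ ih => exact .allR hf hy hΓ hΔ ih
  | exL hf hy hΓ hΔ _ ih => exact .exL hf hy hΓ hΔ ih
  | exR hf _ ih => exact .exR hf ih
  | ref t _ ih => exact .ref t ih
  | repl h _ ih => exact .repl h ih

lemma mono (h : DerC rp n Γ Δ) (hnm : n ≤ m) : DerC rp m Γ Δ := by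
  induction hnm with
  | refl => exact h
  | step _ ih => exact ih.succ

lemma exists_of_two_premises {Γ₁ Δ₁ Γ₂ Δ₂ : Multiset (Fm L)}
    (rule : ∀ {n}, DerC rp n Γ₁ Δ₁ → DerC rp n Γ₂ Δ₂ → DerC rp (n + 1) Γ Δ)
    (h₁ : ∃ n, DerC rp n Γ₁ Δ₁) (h₂ : ∃ n, DerC rp n Γ₂ Δ₂) : ∃ n, DerC rp n Γ Δ := by
  obtain ⟨n₁, d₁⟩ := h₁
  obtain ⟨n₂, d₂⟩ := h₂
  exact ⟨_, rule (d₁.mono (le_max_left n₁ n₂)) (d₂.mono (le_max_right n₁ n₂))⟩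

end DerC

lemma exists_eq_cons_of_add_eq_cons {C : Fm L} {Γ D Γ₀ : Multiset (Fm L)}
    (hC : ¬C.IsAtomic) (h : Γ + D = C ::ₘ Γ₀) (hD : ∀ a ∈ D, EqClosure Γ a) :
    ∃ Γ', Γ = C ::ₘ Γ' ∧ Γ₀ = Γ' + D ∧ ∀ a ∈ D, EqClosure Γ' a := by
  have hCΓ : C ∈ Γ := by
    refine (Multiset.mem_add.mp (h ▸ Multiset.mem_cons_self C Γ₀)).resolve_right fun hCD => ?_
    exact hC (hD C hCD).isAtomic
  obtain ⟨Γ', rfl⟩ := Multiset.exists_cons_of_mem hCΓ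
  refine ⟨Γ', rfl, ?_, fun a ha => (hD a ha).of_cons hC⟩
  rw [Multiset.cons_add] at h
  exact (Multiset.cons_inj_right C).mp h.symm

theorem exists_derC_replMinus_of_eqClosure {n : ℕ} {Γ D Δ : Multiset (Fm L)}
    (hd : DerC (ReplFull L) n (Γ + D) Δ) (hD : ∀ a ∈ D, EqClosure Γ a) :
    ∃ m, DerC (ReplMinus L) m Γ Δ := by
  generalize hΓD : Γ + D = Γ₂ at hd
  induction hd generalizing Γ D with
  | ax hP => exact (EqClosure.of_mem_add (hΓD ▸ Multiset.mem_cons_self _ _) hP hD).exists_derC _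
  | botL =>
    obtain ⟨Γ', rfl, -⟩ := exists_eq_cons_of_add_eq_cons (by rintro ⟨⟩) hΓD hD
    exact ⟨0, .botL⟩
  | @andL _ _ _ A B _ ih =>
    obtain ⟨Γ', rfl, rfl, hD'⟩ := exists_eq_cons_of_add_eq_cons (by rintro ⟨⟩) hΓD hD
    obtain ⟨m, d⟩ := ih (Γ := A ::ₘ B ::ₘ Γ') (fun a ha => (hD' a ha).cons.cons) (by simp)
    exact ⟨m + 1, .andL d⟩
  | andR _ _ ih₁ ih₂ => exact DerC.exists_of_two_premises .andR (ih₁ hD hΓD) (ih₂ hD hΓD)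
  | @orL _ _ _ A B _ _ ih₁ ih₂ =>
    obtain ⟨Γ', rfl, rfl, hD'⟩ := exists_eq_cons_of_add_eq_cons (by rintro ⟨⟩) hΓD hD
    exact DerC.exists_of_two_premises .orL
      (ih₁ (Γ := A ::ₘ Γ') (fun a ha => (hD' a ha).cons) (by simp))
      (ih₂ (Γ := B ::ₘ Γ') (fun a ha => (hD' a ha).cons) (by simp))
  | orR _ ih =>
    obtain ⟨m, d⟩ := ih hD hΓD
    exact ⟨m + 1, .orR d⟩
  | @impL _ _ _ A B _ _ ih₁ ih₂ =>
    obtain ⟨Γ', rfl, rfl, hD'⟩ := exists_eq_cons_of_add_eq_cons (by rintro ⟨⟩) hΓD hD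
    exact DerC.exists_of_two_premises .impL (ih₁ hD' rfl)
      (ih₂ (Γ := B ::ₘ Γ') (fun a ha => (hD' a ha).cons) (by simp))
  | @impR _ _ _ A B _ ih =>
    obtain ⟨m, d⟩ := ih (Γ := A ::ₘ Γ) (fun a ha => (hD a ha).cons) (by simp [← hΓD])
    exact ⟨m + 1, .impR d⟩
  | @allL _ _ _ x t A hf _ ih =>
    obtain ⟨Γ', rfl, rfl, hD'⟩ := exists_eq_cons_of_add_eq_cons (by rintro ⟨⟩) hΓD hD
    obtain ⟨m, d⟩ :=
      ih (Γ := A.subst x t ::ₘ Fm.all x A ::ₘ Γ') (fun a ha => (hD' a ha).cons.cons) (by simp)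
    exact ⟨m + 1, .allL hf d⟩
  | allR hf hy hΓ hΔ _ ih =>
    obtain ⟨m, d⟩ := ih hD hΓD
    exact ⟨m + 1, .allR hf hy (fun C hC => hΓ C (hΓD ▸ Multiset.subset_add_left hC)) hΔ d⟩
  | @exL _ _ _ x y A hf hy hΓ hΔ _ ih =>
    obtain ⟨Γ', rfl, rfl, hD'⟩ := exists_eq_cons_of_add_eq_cons (by rintro ⟨⟩) hΓD hD
    obtain ⟨m, d⟩ :=
      ih (Γ := A.subst x (.var y) ::ₘ Γ') (fun a ha => (hD' a ha).cons) (by simp)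
    exact ⟨m + 1, .exL hf hy (fun C hC => hΓ C (Multiset.subset_add_left hC)) hΔ d⟩
  | exR hf _ ih =>
    obtain ⟨m, d⟩ := ih hD hΓD
    exact ⟨m + 1, .exR hf d⟩
  | ref t _ ih =>
    obtain ⟨m, d⟩ := ih (Γ := Fm.equal t t ::ₘ Γ) (fun a ha => (hD a ha).cons) (by simp [← hΓD])
    exact ⟨m + 1, .ref t d⟩
  | repl hrepl _ ih =>
    obtain ⟨s, r, v, P, Γ₀, hP, hs, hr, rfl, rfl⟩ := hrepl
    have hmem : Fm.equal s r ∈ Γ + D ∧ P.subst v s ∈ Γ + D := by simp [hΓD]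
    have hPr : EqClosure Γ (P.subst v r) := .repl hP hs hr
      (.of_mem_add hmem.1 (.equal s r) hD) (.of_mem_add hmem.2 (hP.subst v s) hD)
    refine ih (D := P.subst v r ::ₘ D) (Multiset.forall_mem_cons.mpr ⟨hPr, hD⟩) ?_
    rw [Multiset.add_cons, hΓD, Multiset.cons_swap _ (Fm.equal s r), Multiset.cons_swap _ (P.subst v s)]

/-- Every sequent derivable in `G3c^=` is derivable in `G3c^=⁻`. -/
theorem G3cEq_to_G3cEqMinus (L : FirstOrder.Language.{u, v})
    (Γ Δ : Multiset (Fm L)) (hd : ∃ n, DerC (ReplFull L) n Γ Δ) :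
    ∃ n, DerC (ReplMinus L) n Γ Δ := by
  obtain ⟨n, d⟩ := hd
  exact exists_derC_replMinus_of_eqClosure (D := 0) (by rwa [add_zero]) (by simp)
end
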